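/- arXiv:2403.04453 — 3 statements merged into one kernel-verified Lean document; each statement's English description precedes it below -/
import Mathlib

section
/- Let L_base(V) = ∫_S (V(s) − ∫_A T(s,a) π(da|s))² μ(ds) and L_WIS(V) = ∫_S ∫_A ρ(s,a) (V(s) − T(s,a))² π_b(da|s) μ(ds). Then the upper bound L_WIS is consistent with L_base: for any bounded measurable V₁, V₂ : S → ℝ, L_WIS(V₁) ≤ L_WIS(V₂) if and only if L_base(V₁) ≤ L_base(V₂); consequently, for any family 𝒱 of bounded measurable functions, V* ∈ 𝒱 minimizes L_WIS over 𝒱 if and only if V* minimizes L_base over 𝒱. -/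
open MeasureTheory ProbabilityTheory

noncomputable def Lbase {S A : Type*} [MeasurableSpace S] [MeasurableSpace A]
    (μ : Measure S) (π : Kernel S A) (T : S → A → ℝ) (V : S → ℝ) : ℝ :=
  ∫ s, (V s - ∫ a, T s a ∂(π s)) ^ 2 ∂μ

noncomputable def Lwis {S A : Type*} [MeasurableSpace S] [MeasurableSpace A]
    (μ : Measure S) (πb : Kernel S A) (ρ : S → A → ℝ) (T : S → A → ℝ) (V : S → ℝ) : ℝ :=
  ∫ s, ∫ a, ρ s a * (V s - T s a) ^ 2 ∂(πb s) ∂μ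

/-- Consistency of the upper bound: for bounded measurable `V₁, V₂`,
`L_WIS(V₁) ≤ L_WIS(V₂) ↔ L_base(V₁) ≤ L_base(V₂)`; consequently, for any family `𝒱`
of bounded measurable functions, `V* ∈ 𝒱` minimizes `L_WIS` over `𝒱` iff it minimizes
`L_base` over `𝒱`. -/
theorem lwis_consistent_with_lbase {S A : Type*} [MeasurableSpace S] [MeasurableSpace A]
    (μ : Measure S) [IsProbabilityMeasure μ]
    (π πb : Kernel S A) [IsMarkovKernel π] [IsMarkovKernel πb]
    (ρ : S → A → ℝ) (hρ_meas : Measurable (Function.uncurry ρ))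
    (hρ_nonneg : ∀ s a, 0 ≤ ρ s a)
    (hRN : ∀ s, π s = (πb s).withDensity (fun a => ENNReal.ofReal (ρ s a)))
    (T : S → A → ℝ) (hT_meas : Measurable (Function.uncurry T))
    (CT : ℝ) (hT_bdd : ∀ s a, |T s a| ≤ CT) :
    (∀ V₁ V₂ : S → ℝ, Measurable V₁ → (∃ C₁, ∀ s, |V₁ s| ≤ C₁) →
        Measurable V₂ → (∃ C₂, ∀ s, |V₂ s| ≤ C₂) →
        (Lwis μ πb ρ T V₁ ≤ Lwis μ πb ρ T V₂ ↔ Lbase μ π T V₁ ≤ Lbase μ π T V₂)) ∧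
    (∀ 𝒱 : Set (S → ℝ), (∀ W ∈ 𝒱, Measurable W ∧ ∃ C, ∀ s, |W s| ≤ C) →
        ∀ Vstar ∈ 𝒱,
          ((∀ W ∈ 𝒱, Lwis μ πb ρ T Vstar ≤ Lwis μ πb ρ T W) ↔
            (∀ W ∈ 𝒱, Lbase μ π T Vstar ≤ Lbase μ π T W))) := by
  -- measurability of sections of T
  have hTs : ∀ s, Measurable (T s) := fun s =>
    hT_meas.comp (measurable_prodMk_left)
  -- integrability of T and T² over π s
  have hIntT : ∀ s, Integrable (T s) (π s) := fun s =>
    (integrable_const CT).mono' (hTs s).aestronglyMeasurable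
      (Filter.Eventually.of_forall fun a => by
        simpa [Real.norm_eq_abs] using hT_bdd s a)
  have hIntT2 : ∀ s, Integrable (fun a => (T s a) ^ 2) (π s) := fun s =>
    (integrable_const (CT ^ 2)).mono' ((hTs s).pow_const 2).aestronglyMeasurable
      (Filter.Eventually.of_forall fun a => by
        have := hT_bdd s a
        have h2 : |T s a| ^ 2 ≤ CT ^ 2 :=
          pow_le_pow_left₀ (abs_nonneg _) this 2
        simpa [Real.norm_eq_abs, abs_pow, sq_abs] using h2)
  set m : S → ℝ := fun s => ∫ a, T s a ∂(π s) with hm_def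
  set q : S → ℝ := fun s => ∫ a, (T s a) ^ 2 ∂(π s) with hq_def
  have hm_meas : Measurable m := by
    have := (hT_meas.stronglyMeasurable).integral_kernel_prod_right' (κ := π)
    exact this.measurable
  have hq_meas : Measurable q := by
    have : StronglyMeasurable (Function.uncurry fun s a => (T s a) ^ 2) :=
      ((hT_meas.pow_const 2).stronglyMeasurable)
    exact (this.integral_kernel_prod_right' (κ := π)).measurable
  have hm_bdd : ∀ s, |m s| ≤ CT := fun s => by
    have := norm_integral_le_of_norm_le_const
      (μ := π s) (C := CT) (f := T s)
      (Filter.Eventually.of_forall fun a => by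
        simpa [Real.norm_eq_abs] using hT_bdd s a)
    simpa [Real.norm_eq_abs] using this
  have hq_bdd : ∀ s, |q s| ≤ CT ^ 2 := fun s => by
    have := norm_integral_le_of_norm_le_const
      (μ := π s) (C := CT ^ 2) (f := fun a => (T s a) ^ 2)
      (Filter.Eventually.of_forall fun a => by
        have h2 : |T s a| ^ 2 ≤ CT ^ 2 := pow_le_pow_left₀ (abs_nonneg _) (hT_bdd s a) 2
        simpa [Real.norm_eq_abs, abs_pow, sq_abs] using h2)
    simpa [Real.norm_eq_abs] using this
  -- the variance constant
  set K : ℝ := ∫ s, (q s - (m s) ^ 2) ∂μ with hK_def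
  have hg_meas : Measurable fun s => q s - (m s) ^ 2 :=
    hq_meas.sub (hm_meas.pow_const 2)
  have hg_int : Integrable (fun s => q s - (m s) ^ 2) μ :=
    (integrable_const (CT ^ 2 + CT ^ 2)).mono' hg_meas.aestronglyMeasurable
      (Filter.Eventually.of_forall fun s => by
        have h1 := hq_bdd s
        have h2 : |(m s) ^ 2| ≤ CT ^ 2 := by
          rw [abs_pow]
          exact pow_le_pow_left₀ (abs_nonneg _) (hm_bdd s) 2
        calc ‖q s - (m s) ^ 2‖ ≤ |q s| + |(m s) ^ 2| := abs_sub _ _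
          _ ≤ CT ^ 2 + CT ^ 2 := add_le_add h1 h2)
  -- Step 1: inner reweighting: ∫ ρ (V-T)² dπb = ∫ (V-T)² dπ
  have step1 : ∀ (V : S → ℝ) (s : S),
      ∫ a, ρ s a * (V s - T s a) ^ 2 ∂(πb s)
        = ∫ a, (V s - T s a) ^ 2 ∂(π s) := by
    intro V s
    rw [hRN s]
    have hρs : Measurable fun a => (ρ s a).toNNReal :=
      (hρ_meas.comp measurable_prodMk_left).real_toNNReal
    have : (fun a : A => ENNReal.ofReal (ρ s a))
        = fun a => ((ρ s a).toNNReal : ENNReal) := rfl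
    rw [this, integral_withDensity_eq_integral_smul hρs]
    congr 1
    funext a
    simp [NNReal.smul_def, Real.coe_toNNReal _ (hρ_nonneg s a)]
  -- Step 2: pointwise expansion
  have step2 : ∀ (V : S → ℝ) (s : S),
      ∫ a, (V s - T s a) ^ 2 ∂(π s)
        = (V s - m s) ^ 2 + (q s - (m s) ^ 2) := by
    intro V s
    have hexp : (fun a => (V s - T s a) ^ 2)
        = fun a => ((V s) ^ 2 - (2 * V s) * T s a) + (T s a) ^ 2 := by
      funext a; ring
    have hA : Integrable (fun a => (V s) ^ 2 - (2 * V s) * T s a) (π s) :=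
      (integrable_const _).sub ((hIntT s).const_mul _)
    have hB : Integrable (fun _ : A => (V s) ^ 2) (π s) := integrable_const _
    have hC' : Integrable (fun a => (2 * V s) * T s a) (π s) := (hIntT s).const_mul _
    rw [hexp, integral_add hA (hIntT2 s), integral_sub hB hC',
      integral_const, integral_const_mul]
    simp only [measure_univ, probReal_univ, ENNReal.toReal_one, smul_eq_mul, one_mul]
    show V s ^ 2 - 2 * V s * m s + q s = (V s - m s) ^ 2 + (q s - m s ^ 2)
    ring
  -- the key identity
  have key : ∀ (V : S → ℝ), Measurable V → (∃ C, ∀ s, |V s| ≤ C) →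
      Lwis μ πb ρ T V = Lbase μ π T V + K := by
    rintro V hV ⟨C, hC⟩
    have hf_meas : Measurable fun s => (V s - m s) ^ 2 :=
      (hV.sub hm_meas).pow_const 2
    have hf_int : Integrable (fun s => (V s - m s) ^ 2) μ :=
      (integrable_const ((C + CT) ^ 2)).mono' hf_meas.aestronglyMeasurable
        (Filter.Eventually.of_forall fun s => by
          have h1 : |V s - m s| ≤ C + CT :=
            (abs_sub _ _).trans (add_le_add (hC s) (hm_bdd s))
          have : |V s - m s| ^ 2 ≤ (C + CT) ^ 2 :=
            pow_le_pow_left₀ (abs_nonneg _) h1 2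
          simpa [Real.norm_eq_abs, abs_pow, sq_abs] using this)
    calc Lwis μ πb ρ T V
        = ∫ s, ((V s - m s) ^ 2 + (q s - (m s) ^ 2)) ∂μ := by
          unfold Lwis
          refine integral_congr_ae (Filter.Eventually.of_forall fun s => ?_)
          dsimp only
          rw [step1 V s, step2 V s]
      _ = Lbase μ π T V + K := by
          rw [integral_add hf_int hg_int]; rfl
  constructor
  · intro V₁ V₂ h1m h1b h2m h2b
    rw [key V₁ h1m h1b, key V₂ h2m h2b]
    exact add_le_add_iff_right K
  · intro 𝒱 h𝒱 Vstar hVstar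
    constructor
    · intro h W hW
      have ⟨hWm, hWb⟩ := h𝒱 W hW
      have ⟨hVm, hVb⟩ := h𝒱 Vstar hVstar
      have hle := h W hW
      rw [key Vstar hVm hVb, key W hWm hWb] at hle
      exact le_of_add_le_add_right hle
    · intro h W hW
      have ⟨hWm, hWb⟩ := h𝒱 W hW
      have ⟨hVm, hVb⟩ := h𝒱 Vstar hVstar
      rw [key Vstar hVm hVb, key W hWm hWb]
      exact add_le_add_left (h W hW) K
end

section
/- The empirical 1-step V-trace critic loss satisfies the identity L_Vtrace(V) = (1/N) Σᵢ (V − ((1−ρᵢ)V + ρᵢ rᵢ))² = (1/N) Σᵢ ρᵢ² (V − rᵢ)² for every V ∈ ℝ, and if Σᵢ ρᵢ² > 0 then it has a unique minimizer over V ∈ ℝ, namely the squared self-normalized estimator V̂_Vtrace = (Σᵢ ρᵢ² rᵢ) / (Σᵢ ρᵢ²). -/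
lemma vtrace_sum_diff (N : ℕ) (ρ r : Fin N → ℝ)
    (hS : 0 < ∑ i, (ρ i) ^ 2) (V : ℝ) :
    ∑ i, (ρ i) ^ 2 * (V - r i) ^ 2
      = (∑ i, (ρ i) ^ 2) * (V - (∑ j, (ρ j) ^ 2 * r j) / (∑ j, (ρ j) ^ 2)) ^ 2
        + ∑ i, (ρ i) ^ 2 * ((∑ j, (ρ j) ^ 2 * r j) / (∑ j, (ρ j) ^ 2) - r i) ^ 2 := by
  set S := ∑ i, (ρ i) ^ 2 with hSdef
  set T := ∑ j, (ρ j) ^ 2 * r j with hTdef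
  set m := T / S with hm
  have hSne : S ≠ 0 := ne_of_gt hS
  have hSm : S * m = T := by rw [hm]; field_simp
  have key : ∀ i, (ρ i) ^ 2 * (V - r i) ^ 2
      = (ρ i) ^ 2 * ((V - m) ^ 2 + 2 * (V - m) * (m - r i) + (m - r i) ^ 2) := by
    intro i; ring
  rw [Finset.sum_congr rfl (fun i _ => key i)]
  simp only [mul_add, Finset.sum_add_distrib]
  have h1 : ∑ i, (ρ i) ^ 2 * (V - m) ^ 2 = S * (V - m) ^ 2 := by
    rw [← Finset.sum_mul]
  have h2 : ∑ i, (ρ i) ^ 2 * (2 * (V - m) * (m - r i)) = 0 := by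
    have : ∑ i, (ρ i) ^ 2 * (2 * (V - m) * (m - r i))
        = 2 * (V - m) * (S * m - T) := by
      have : ∀ i : Fin N, (ρ i) ^ 2 * (2 * (V - m) * (m - r i))
          = 2 * (V - m) * ((ρ i) ^ 2 * m) - 2 * (V - m) * ((ρ i) ^ 2 * r i) := by
        intro i; ring
      rw [Finset.sum_congr rfl (fun i _ => this i), Finset.sum_sub_distrib,
        ← Finset.mul_sum, ← Finset.mul_sum, ← Finset.sum_mul]
      ring
    rw [this, hSm]; ring
  rw [h1, h2]; ring

/-- The empirical 1-step V-trace critic loss satisfies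
`(1/N) Σᵢ (V − ((1−ρᵢ)V + ρᵢ rᵢ))² = (1/N) Σᵢ ρᵢ² (V − rᵢ)²` for every `V`, and if
`Σᵢ ρᵢ² > 0` then it has a unique minimizer over `V ∈ ℝ`, namely the squared
self-normalized estimator `V̂_Vtrace = (Σᵢ ρᵢ² rᵢ) / (Σᵢ ρᵢ²)`. -/
theorem vtrace_loss_identity_and_unique_minimizer (N : ℕ) (hN : 1 ≤ N) (ρ r : Fin N → ℝ)
    (hρ : ∀ i, 0 ≤ ρ i) :
    (∀ V : ℝ,
        (1 / N : ℝ) * ∑ i, (V - ((1 - ρ i) * V + ρ i * r i)) ^ 2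
          = (1 / N : ℝ) * ∑ i, (ρ i) ^ 2 * (V - r i) ^ 2) ∧
    (0 < ∑ i, (ρ i) ^ 2 →
      (∀ V : ℝ,
          (1 / N : ℝ) * ∑ i, (((∑ j, (ρ j) ^ 2 * r j) / (∑ j, (ρ j) ^ 2))
              - ((1 - ρ i) * ((∑ j, (ρ j) ^ 2 * r j) / (∑ j, (ρ j) ^ 2)) + ρ i * r i)) ^ 2
            ≤ (1 / N : ℝ) * ∑ i, (V - ((1 - ρ i) * V + ρ i * r i)) ^ 2) ∧
      (∀ V : ℝ, V ≠ (∑ j, (ρ j) ^ 2 * r j) / (∑ j, (ρ j) ^ 2) →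
          (1 / N : ℝ) * ∑ i, (((∑ j, (ρ j) ^ 2 * r j) / (∑ j, (ρ j) ^ 2))
              - ((1 - ρ i) * ((∑ j, (ρ j) ^ 2 * r j) / (∑ j, (ρ j) ^ 2)) + ρ i * r i)) ^ 2
            < (1 / N : ℝ) * ∑ i, (V - ((1 - ρ i) * V + ρ i * r i)) ^ 2)) := by
  have hNpos : (0 : ℝ) < 1 / N := by
    have : (0:ℝ) < N := by exact_mod_cast hN
    positivity
  have hid : ∀ V : ℝ,
      (1 / N : ℝ) * ∑ i, (V - ((1 - ρ i) * V + ρ i * r i)) ^ 2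
        = (1 / N : ℝ) * ∑ i, (ρ i) ^ 2 * (V - r i) ^ 2 := by
    intro V
    congr 1
    exact Finset.sum_congr rfl (fun i _ => by ring)
  refine ⟨hid, fun hS => ?_⟩
  set m := (∑ j, (ρ j) ^ 2 * r j) / (∑ j, (ρ j) ^ 2) with hm
  have hdiff : ∀ V : ℝ,
      (1 / N : ℝ) * ∑ i, (V - ((1 - ρ i) * V + ρ i * r i)) ^ 2
        = (1 / N : ℝ) * ((∑ i, (ρ i) ^ 2) * (V - m) ^ 2)
          + (1 / N : ℝ) * ∑ i, (m - ((1 - ρ i) * m + ρ i * r i)) ^ 2 := by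
    intro V
    rw [hid V, hid m, vtrace_sum_diff N ρ r hS V, mul_add]
  constructor
  · intro V
    rw [hdiff V]
    nlinarith [sq_nonneg (V - m), mul_pos hNpos hS,
      mul_nonneg (mul_pos hNpos hS).le (sq_nonneg (V - m))]
  · intro V hV
    rw [hdiff V]
    have hVm : (0:ℝ) < (V - m) ^ 2 := by
      have : V - m ≠ 0 := sub_ne_zero.mpr hV
      positivity
    have : 0 < (1 / N : ℝ) * ((∑ i, (ρ i) ^ 2) * (V - m) ^ 2) :=
      mul_pos hNpos (mul_pos hS hVm)
    linarith
end

section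
/- If ρ₁, …, ρₙ are nonnegative and not all zero, then the effective sample size of the self-normalized importance sampling estimator is at least that of the squared-weight (V-trace) estimator: n_eff^ρ = (Σᵢ ρᵢ)² / (Σᵢ ρᵢ²) ≥ (Σᵢ ρᵢ²)² / (Σᵢ ρᵢ⁴) = n_eff^{ρ²}. -/
/-! The power sums `pₖ = Σᵢ ρᵢᵏ` of nonnegative weights are log-convex in `k`: by Cauchy–Schwarz,
`pₖ₊₁² ≤ pₖ pₖ₊₂`. Chaining `p₂² ≤ p₁ p₃` and `p₃² ≤ p₂ p₄` gives `p₂⁴ ≤ p₁² p₂ p₄`, i.e.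
`p₂³ ≤ p₁² p₄`, which is the claimed inequality after clearing denominators. -/

open Finset

namespace Finset

variable {ι R : Type*} [CommSemiring R] [LinearOrder R] [IsStrictOrderedRing R] [ExistsAddOfLE R]

theorem sq_sum_pow_succ_le_sum_pow_mul_sum_pow_add_two (s : Finset ι) {f : ι → R}
    (hf : ∀ i ∈ s, 0 ≤ f i) (k : ℕ) :
    (∑ i ∈ s, f i ^ (k + 1)) ^ 2 ≤ (∑ i ∈ s, f i ^ k) * ∑ i ∈ s, f i ^ (k + 2) :=
  sum_sq_le_sum_mul_sum_of_sq_le_mul s (fun i hi => pow_nonneg (hf i hi) k)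
    (fun i hi => pow_nonneg (hf i hi) (k + 2)) fun i _ => le_of_eq (by ring)

theorem sum_sq_pow_three_le_sq_sum_mul_sum_pow_four (s : Finset ι) {f : ι → R}
    (hf : ∀ i ∈ s, 0 ≤ f i) :
    (∑ i ∈ s, f i ^ 2) ^ 3 ≤ (∑ i ∈ s, f i) ^ 2 * ∑ i ∈ s, f i ^ 4 := by
  set p : ℕ → R := fun k => ∑ i ∈ s, f i ^ k
  have hp : ∀ k, 0 ≤ p k := fun k => sum_nonneg fun i hi => pow_nonneg (hf i hi) k
  have h₁ : p 2 ^ 2 ≤ p 1 * p 3 := by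
    simpa [p] using sq_sum_pow_succ_le_sum_pow_mul_sum_pow_add_two s hf 1
  have h₃ : p 3 ^ 2 ≤ p 2 * p 4 := sq_sum_pow_succ_le_sum_pow_mul_sum_pow_add_two s hf 2
  have key : p 2 * p 2 ^ 3 ≤ p 2 * (p 1 ^ 2 * p 4) :=
    calc p 2 * p 2 ^ 3 = (p 2 ^ 2) ^ 2 := by ring
      _ ≤ (p 1 * p 3) ^ 2 := pow_le_pow_left₀ (sq_nonneg _) h₁ 2
      _ = p 1 ^ 2 * p 3 ^ 2 := by ring
      _ ≤ p 1 ^ 2 * (p 2 * p 4) := mul_le_mul_of_nonneg_left h₃ (sq_nonneg _)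
      _ = p 2 * (p 1 ^ 2 * p 4) := by ring
  rcases (hp 2).eq_or_lt with h | h
  · simpa [p, ← h] using mul_nonneg (sq_nonneg (p 1)) (hp 4)
  · simpa [p] using le_of_mul_le_mul_left key h

end Finset

theorem ess_self_normalized_ge_ess_squared_general (n : ℕ) (ρ : Fin n → ℝ)
    (hρ : ∀ i, 0 ≤ ρ i) (hne : ∃ i, ρ i ≠ 0) :
    (∑ i, (ρ i) ^ 2) ^ 2 / (∑ i, (ρ i) ^ 4)
      ≤ (∑ i, ρ i) ^ 2 / (∑ i, (ρ i) ^ 2) := by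
  obtain ⟨j, hj⟩ := hne
  have hsq : 0 < ∑ i, ρ i ^ 2 :=
    sum_pos' (fun i _ => by positivity) ⟨j, mem_univ j, by positivity⟩
  have hfourth : 0 < ∑ i, ρ i ^ 4 :=
    sum_pos' (fun i _ => by positivity) ⟨j, mem_univ j, by positivity⟩
  rw [div_le_div_iff₀ hfourth hsq, ← pow_succ]
  exact sum_sq_pow_three_le_sq_sum_mul_sum_pow_four univ fun i _ => hρ i

/-- If the nonnegative weights `ρᵢ` are not all zero, the effective sample size of the
self-normalized importance sampling estimator dominates that of the squared-weight
(V-trace) estimator: `(Σᵢ ρᵢ²)² / (Σᵢ ρᵢ⁴) ≤ (Σᵢ ρᵢ)² / (Σᵢ ρᵢ²)`. -/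
theorem ess_self_normalized_ge_ess_squared (n : ℕ) (hn : 1 ≤ n) (ρ : Fin n → ℝ)
    (hρ : ∀ i, 0 ≤ ρ i) (hne : ∃ i, ρ i ≠ 0) :
    (∑ i, (ρ i) ^ 2) ^ 2 / (∑ i, (ρ i) ^ 4)
      ≤ (∑ i, ρ i) ^ 2 / (∑ i, (ρ i) ^ 2) :=
  ess_self_normalized_ge_ess_squared_general n ρ hρ hne
end
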